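/- arXiv:1702.06391 — 5 statements merged into one kernel-verified Lean document; each statement's English description precedes it below -/
import Mathlib

section
/- For any edge {i,j} with j interior, the difference of the min-sum messages satisfies the sign recursion: m^n_{j→i} = sign(Σ_{k∈∂j\{i}} m^{n-1}_{k→j}), where m^n_{j→i} := M^n_{j→i}(-1) - M^n_{j→i}(1), M denotes the min-sum BP messages with binary states {-1,+1} and Ising potential I(x_i ≠ x_j), and sign(0)=0. -/
theorem Int.min_one_add_sub_min_one_add (a b : ℤ) :
    min (1 + a) b - min a (1 + b) = (b - a).sign := by
  rcases lt_trichotomy a b with hab | rfl | hab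
  · rw [Int.sign_eq_one_of_pos (by omega)]
    omega
  · rw [sub_self, Int.sign_zero]
    omega
  · rw [Int.sign_eq_neg_one_of_neg (by omega)]
    omega

theorem difference_message_recursion_general
    {V : Type*} [Fintype V] [DecidableEq V]
    (G : SimpleGraph V) [DecidableRel G.Adj]
    (B : Finset V)
    (M : ℕ → V → V → ℤ → ℤ)
    -- update: for j ∈ B and n > 0,
    -- M^n_{j→i}(s) = min_{z ∈ {±1}} [ I(s ≠ z) + Σ_{k ∈ ∂j\{i}} M^{n-1}_{k→j}(z) ]
    (hup : ∀ j ∈ B, ∀ i, ∀ n : ℕ, 0 < n → ∀ s : ℤ,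
      M n j i s =
        min ((if s ≠ 1 then 1 else 0) + ∑ k ∈ G.neighborFinset j \ {i}, M (n-1) k j 1)
            ((if s ≠ -1 then 1 else 0) + ∑ k ∈ G.neighborFinset j \ {i}, M (n-1) k j (-1))) :
    ∀ j ∈ B, ∀ i, G.Adj j i → ∀ n : ℕ, 0 < n →
      M n j i (-1) - M n j i 1 =
        Int.sign (∑ k ∈ G.neighborFinset j \ {i}, (M (n-1) k j (-1) - M (n-1) k j 1)) := by
  intro j hj i _ n hn
  rw [hup j hj i n hn (-1), hup j hj i n hn 1, Finset.sum_sub_distrib]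
  simpa using Int.min_one_add_sub_min_one_add _ _

/-- Min-sum BP messages `M` on a graph `G` with interior `B` and boundary
configuration `x` satisfy: the difference messages
`m^n_{j→i} := M^n_{j→i}(-1) - M^n_{j→i}(1)` obey the sign recursion
`m^n_{j→i} = sign (Σ_{k ∈ ∂j \ {i}} m^{n-1}_{k→j})` for interior senders `j`. -/
theorem difference_message_recursion
    {V : Type*} [Fintype V] [DecidableEq V]
    (G : SimpleGraph V) [DecidableRel G.Adj]
    (B : Finset V) (x : V → ℤ)
    (M : ℕ → V → V → ℤ → ℤ)
    -- boundary condition: for j ∉ B, M^n_{j→i}(s) = 1 if x_j ≠ s, else 0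
    (hbd : ∀ j, j ∉ B → ∀ i, ∀ n : ℕ, ∀ s : ℤ,
      M n j i s = if x j ≠ s then 1 else 0)
    -- initialization: for j ∈ B, M^0_{j→i}(s) = 0
    (h0 : ∀ j ∈ B, ∀ i, ∀ s : ℤ, M 0 j i s = 0)
    -- update: for j ∈ B and n > 0,
    -- M^n_{j→i}(s) = min_{z ∈ {±1}} [ I(s ≠ z) + Σ_{k ∈ ∂j\{i}} M^{n-1}_{k→j}(z) ]
    (hup : ∀ j ∈ B, ∀ i, ∀ n : ℕ, 0 < n → ∀ s : ℤ,
      M n j i s =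
        min ((if s ≠ 1 then 1 else 0) + ∑ k ∈ G.neighborFinset j \ {i}, M (n-1) k j 1)
            ((if s ≠ -1 then 1 else 0) + ∑ k ∈ G.neighborFinset j \ {i}, M (n-1) k j (-1))) :
    ∀ j ∈ B, ∀ i, G.Adj j i → ∀ n : ℕ, 0 < n →
      M n j i (-1) - M n j i 1 =
        Int.sign (∑ k ∈ G.neighborFinset j \ {i}, (M (n-1) k j (-1) - M (n-1) k j 1)) :=
  difference_message_recursion_general G B M hup
end

section
/- On the (N+2)×(N+2) grid graph, at most two of the four interior corners can have both their boundary neighbors equal to +1, under the assumption that the positive run is no larger than the negative run (|R⁺| ≤ |R⁻|) for a one-run boundary configuration. -/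
/-- Vertex set of the `(N+2) × (N+2)` grid graph: `{0, …, N+1}²`. -/
def gridV (N : ℕ) : Set (ℤ × ℤ) :=
  {p | 0 ≤ p.1 ∧ p.1 ≤ N + 1 ∧ 0 ≤ p.2 ∧ p.2 ≤ N + 1}

/-- The interior `B = {1, …, N}²` of the grid. -/
def gridB (N : ℕ) : Set (ℤ × ℤ) :=
  {p | 1 ≤ p.1 ∧ p.1 ≤ N ∧ 1 ≤ p.2 ∧ p.2 ≤ N}

/-- The grid graph with the 4-neighbor topology. -/
def gridGraph (N : ℕ) : SimpleGraph (ℤ × ℤ) where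
  Adj p q := p ∈ gridV N ∧ q ∈ gridV N ∧ |p.1 - q.1| + |p.2 - q.2| = 1
  symm := by
    constructor
    intro p q h
    refine ⟨h.2.1, h.1, ?_⟩
    rw [abs_sub_comm q.1, abs_sub_comm q.2]
    exact h.2.2
  loopless := by
    constructor
    intro p h
    simp at h

/-- An edge is an odd bond for configuration `y` when its endpoints get different values. -/
def isOdd (y : ℤ × ℤ → ℤ) (e : Sym2 (ℤ × ℤ)) : Prop :=
  Sym2.lift ⟨fun u v => y u ≠ y v, fun u v => by simp [ne_comm]⟩ e

/-- Number of odd bonds on edges with at least one endpoint in the interior. -/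
noncomputable def oddBonds (N : ℕ) (y : ℤ × ℤ → ℤ) : ℕ :=
  {e ∈ (gridGraph N).edgeSet | (∃ u ∈ e, u ∈ gridB N) ∧ isOdd y e}.ncard

/-- `y` is a valid configuration extending the boundary configuration `x`:
it agrees with `x` off the interior and takes values in `{±1}` on the interior. -/
def isConfig (N : ℕ) (x y : ℤ × ℤ → ℤ) : Prop :=
  (∀ p, p ∉ gridB N → y p = x p) ∧ (∀ p ∈ gridB N, y p = 1 ∨ y p = -1)

/-- `O*_i(s, x)`: minimal number of odd bonds over configurations with `y i = s`. -/
noncomputable def Ostar (N : ℕ) (x : ℤ × ℤ → ℤ) (i : ℤ × ℤ) (s : ℤ) : ℕ :=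
  sInf {n | ∃ y, isConfig N x y ∧ y i = s ∧ oddBonds N y = n}

/-- Minimal number of odd bonds over all configurations. -/
noncomputable def OstarGlobal (N : ℕ) (x : ℤ × ℤ → ℤ) : ℕ :=
  sInf {n | ∃ y, isConfig N x y ∧ oddBonds N y = n}

/-- A global (MAP) solution. -/
def isGlobalSol (N : ℕ) (x y : ℤ × ℤ → ℤ) : Prop :=
  isConfig N x y ∧ oddBonds N y = OstarGlobal N x

/-- The boundary configuration takes values in `{±1}`. -/
def isBoundaryConfig (N : ℕ) (x : ℤ × ℤ → ℤ) : Prop :=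
  ∀ p ∈ gridV N, p ∉ gridB N → x p = 1 ∨ x p = -1

/-- One-run boundary: the set `R⁺` of `+1` boundary sites induces a connected subgraph. -/
def oneRun (N : ℕ) (x : ℤ × ℤ → ℤ) : Prop :=
  ((gridGraph N).induce {p | p ∈ gridV N ∧ p ∉ gridB N ∧ x p = 1}).Connected

lemma mem_gridV (N : ℕ) (a b : ℤ) :
    (a, b) ∈ gridV N ↔ 0 ≤ a ∧ a ≤ N + 1 ∧ 0 ≤ b ∧ b ≤ N + 1 := Iff.rfl

lemma mem_gridB (N : ℕ) (a b : ℤ) :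
    (a, b) ∈ gridB N ↔ 1 ≤ a ∧ a ≤ N ∧ 1 ≤ b ∧ b ≤ N := Iff.rfl

lemma abs_one_of {a b c d : ℤ}
    (h : (a = c ∧ (b - d = 1 ∨ d - b = 1)) ∨ (b = d ∧ (a - c = 1 ∨ c - a = 1))) :
    |a - c| + |b - d| = 1 := by
  rcases abs_cases (a - c) with h1|h1 <;> rcases abs_cases (b - d) with h2|h2 <;>
    rw [h1.1, h2.1] <;> omega

/-- Cyclic position of a boundary-ring vertex, in `[0, 4N+3]`. -/
def ringPos (N : ℕ) (p : ℤ × ℤ) : ℤ :=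
  if p.2 = 0 then p.1
  else if p.1 = N + 1 then N + 1 + p.2
  else if p.2 = N + 1 then 3 * N + 3 - p.1
  else 4 * N + 4 - p.2

lemma ringPos_range {N : ℕ} {p : ℤ × ℤ} (hp : p ∈ gridV N \ gridB N) :
    0 ≤ ringPos N p ∧ ringPos N p ≤ 4 * N + 3 := by
  obtain ⟨a, b⟩ := p
  rw [Set.mem_diff, mem_gridV, mem_gridB] at hp
  unfold ringPos
  dsimp only
  split_ifs <;> omega

lemma ringPos_inj {N : ℕ} {p q : ℤ × ℤ} (hp : p ∈ gridV N \ gridB N)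
    (hq : q ∈ gridV N \ gridB N) (h : ringPos N p = ringPos N q) : p = q := by
  obtain ⟨a, b⟩ := p; obtain ⟨c, d⟩ := q
  rw [Set.mem_diff, mem_gridV, mem_gridB] at hp hq
  unfold ringPos at h
  dsimp only at h
  have : a = c ∧ b = d := by split_ifs at h <;> omega
  rw [this.1, this.2]

lemma ringPos_adj {N : ℕ} (hN : 1 ≤ N) {p q : ℤ × ℤ} (hp : p ∈ gridV N \ gridB N)
    (hq : q ∈ gridV N \ gridB N) (hadj : (gridGraph N).Adj p q) :
    ringPos N q = ringPos N p + 1 ∨ ringPos N p = ringPos N q + 1 ∨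
    (ringPos N p = 0 ∧ ringPos N q = 4 * N + 3) ∨
    (ringPos N q = 0 ∧ ringPos N p = 4 * N + 3) := by
  obtain ⟨a, b⟩ := p; obtain ⟨c, d⟩ := q
  rw [Set.mem_diff, mem_gridV, mem_gridB] at hp hq
  have habs : |a - c| + |b - d| = 1 := hadj.2.2
  have hcases : (a = c ∧ (b - d = 1 ∨ d - b = 1)) ∨ (b = d ∧ (a - c = 1 ∨ c - a = 1)) := by
    rcases abs_cases (a - c) with h1|h1 <;> rcases abs_cases (b - d) with h2|h2 <;>
      rw [h1.1, h2.1] at habs <;> omega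
  unfold ringPos
  dsimp only
  split_ifs <;> omega

lemma walk_ivt {V : Type*} {G : SimpleGraph V} (f : V → ℤ)
    (hstep : ∀ u v : V, G.Adj u v → f v = f u + 1 ∨ f v = f u - 1)
    {a b : V} (w : G.Walk a b) :
    ∀ m : ℤ, (f a ≤ m ∧ m ≤ f b) ∨ (f b ≤ m ∧ m ≤ f a) → ∃ u ∈ w.support, f u = m := by
  induction w with
  | @nil u => intro m hm; exact ⟨u, by simp, by omega⟩
  | @cons u v w' hadj p ih =>
    intro m hm
    by_cases hm0 : f u = m
    · exact ⟨u, by simp, hm0⟩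
    · have hs := hstep _ _ hadj
      obtain ⟨z, hz, hzm⟩ := ih m (by omega)
      exact ⟨z, by simp [hz], hzm⟩


/-- On the `(N+2) × (N+2)` grid with a one-run boundary configuration whose positive
run is no larger than the negative run, at most two of the four interior corners
have both boundary neighbors equal to `+1`. -/
theorem corners_card_le_two (N : ℕ) (hN : 1 ≤ N) (x : ℤ × ℤ → ℤ)
    (hx : isBoundaryConfig N x) (hrun : oneRun N x)
    (hsize : {p | p ∈ gridV N ∧ p ∉ gridB N ∧ x p = 1}.ncard ≤
             {p | p ∈ gridV N ∧ p ∉ gridB N ∧ x p = -1}.ncard) :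
    {c ∈ ({((1:ℤ),(1:ℤ)), ((N:ℤ),(1:ℤ)), ((1:ℤ),(N:ℤ)), ((N:ℤ),(N:ℤ))} : Set (ℤ × ℤ)) |
      ∀ q, (gridGraph N).Adj c q → q ∉ gridB N → x q = 1}.ncard ≤ 2 := by
  classical
  rcases Nat.lt_or_ge N 2 with hN1 | hN2
  · -- N = 1 : all four corners coincide
    have hNeq : N = 1 := by omega
    subst hNeq
    refine le_trans (Set.ncard_le_ncard ?_ (Set.finite_singleton ((1:ℤ),(1:ℤ)))) ?_
    · intro z hz
      have h := hz.1
      simp only [Nat.cast_one, Set.mem_insert_iff, Set.mem_singleton_iff] at h ⊢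
      rcases h with h|h|h|h <;> exact h
    · rw [Set.ncard_singleton]
      omega
  · -- main case, N ≥ 2
    by_contra hcon
    push_neg at hcon
    set R : Set (ℤ × ℤ) := {p | p ∈ gridV N ∧ p ∉ gridB N ∧ x p = 1} with hRdef
    set Rm : Set (ℤ × ℤ) := {p | p ∈ gridV N ∧ p ∉ gridB N ∧ x p = -1} with hRmdef
    set S : Set (ℤ × ℤ) :=
      {c ∈ ({((1:ℤ),(1:ℤ)), ((N:ℤ),(1:ℤ)), ((1:ℤ),(N:ℤ)), ((N:ℤ),(N:ℤ))} : Set (ℤ × ℤ)) |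
        ∀ q, (gridGraph N).Adj c q → q ∉ gridB N → x q = 1} with hSdef
    have hrun' : ((gridGraph N).induce R).Connected := hrun
    -- finiteness and cardinality of the boundary ring
    have hinj : Set.InjOn (ringPos N) (gridV N \ gridB N) :=
      fun p hp q hq h => ringPos_inj hp hq h
    have himg : ringPos N '' (gridV N \ gridB N) ⊆ Set.Icc 0 (4 * N + 3) := by
      rintro m ⟨p, hp, rfl⟩
      exact Set.mem_Icc.2 (ringPos_range hp)
    have hringfin : (gridV N \ gridB N).Finite :=
      Set.Finite.of_finite_image ((Set.finite_Icc _ _).subset himg) hinj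
    have hringcard : (gridV N \ gridB N).ncard ≤ 4 * N + 4 := by
      rw [← Set.ncard_image_of_injOn hinj]
      have h1 := Set.ncard_le_ncard himg (Set.finite_Icc _ _)
      have h2 : (Set.Icc (0:ℤ) (4 * N + 3)).ncard = 4 * N + 4 := by
        rw [← Finset.coe_Icc, Set.ncard_coe_finset, Int.card_Icc]
        omega
      omega
    have hRsub : R ⊆ gridV N \ gridB N := fun p hp => ⟨hp.1, hp.2.1⟩
    have hRmsub : Rm ⊆ gridV N \ gridB N := fun p hp => ⟨hp.1, hp.2.1⟩
    have hRfin : R.Finite := hringfin.subset hRsub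
    have hRmfin : Rm.Finite := hringfin.subset hRmsub
    have hdisj : Disjoint R Rm := by
      rw [Set.disjoint_left]
      rintro p ⟨_, _, h1⟩ ⟨_, _, h2⟩
      omega
    have hcount : R.ncard + Rm.ncard ≤ 4 * N + 4 := by
      rw [← Set.ncard_union_eq hdisj hRfin hRmfin]
      exact le_trans (Set.ncard_le_ncard (Set.union_subset hRsub hRmsub) hringfin) hringcard
    have hRle : R.ncard ≤ 2 * N + 2 := by omega
    -- membership helper
    have hadjR : ∀ c1 c2 q1 q2 : ℤ, (c1, c2) ∈ S →
        (0 ≤ c1 ∧ c1 ≤ N + 1 ∧ 0 ≤ c2 ∧ c2 ≤ N + 1) →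
        (0 ≤ q1 ∧ q1 ≤ N + 1 ∧ 0 ≤ q2 ∧ q2 ≤ N + 1) →
        ¬(1 ≤ q1 ∧ q1 ≤ N ∧ 1 ≤ q2 ∧ q2 ≤ N) →
        ((c1 = q1 ∧ (c2 - q2 = 1 ∨ q2 - c2 = 1)) ∨ (c2 = q2 ∧ (c1 - q1 = 1 ∨ q1 - c1 = 1))) →
        (q1, q2) ∈ R := by
      intro c1 c2 q1 q2 hc hcv hqv hqb habs
      exact ⟨hqv, hqb, hc.2 (q1, q2) ⟨hcv, hqv, abs_one_of habs⟩ hqb⟩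
    -- ring positions of the eight relevant points
    have eP1 : ringPos N ((1:ℤ), (0:ℤ)) = 1 := by
      unfold ringPos; dsimp only; split_ifs <;> omega
    have eP2 : ringPos N ((0:ℤ), (1:ℤ)) = 4 * N + 3 := by
      unfold ringPos; dsimp only; split_ifs <;> omega
    have eP3 : ringPos N ((N:ℤ), (0:ℤ)) = N := by
      unfold ringPos; dsimp only; split_ifs <;> omega
    have eP4 : ringPos N ((N:ℤ) + 1, (1:ℤ)) = N + 2 := by
      unfold ringPos; dsimp only; split_ifs <;> omega
    have eP5 : ringPos N ((N:ℤ) + 1, (N:ℤ)) = 2 * N + 1 := by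
      unfold ringPos; dsimp only; split_ifs <;> omega
    have eP6 : ringPos N ((N:ℤ), (N:ℤ) + 1) = 2 * N + 3 := by
      unfold ringPos; dsimp only; split_ifs <;> omega
    have eP7 : ringPos N ((1:ℤ), (N:ℤ) + 1) = 3 * N + 2 := by
      unfold ringPos; dsimp only; split_ifs <;> omega
    have eP8 : ringPos N ((0:ℤ), (N:ℤ)) = 3 * N + 4 := by
      unfold ringPos; dsimp only; split_ifs <;> omega
    -- the main geometric scenario: six points of R around the ring with all cyclic
    -- gaps at most 2N+1 forces |R| too large
    have scenario : ∀ r1 r2 r3 r4 r5 r6 : ℤ × ℤ, ∀ q1 q2 q3 q4 q5 q6 : ℤ,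
        r1 ∈ R → r2 ∈ R → r3 ∈ R → r4 ∈ R → r5 ∈ R → r6 ∈ R →
        ringPos N r1 = q1 → ringPos N r2 = q2 → ringPos N r3 = q3 →
        ringPos N r4 = q4 → ringPos N r5 = q5 → ringPos N r6 = q6 →
        (0 ≤ q1 ∧ q1 < q2 ∧ q2 < q3 ∧ q3 < q4 ∧ q4 < q5 ∧ q5 < q6 ∧ q6 ≤ 4 * N + 3 ∧
         q2 - q1 ≤ 2 * N + 1 ∧ q3 - q2 ≤ 2 * N + 1 ∧ q4 - q3 ≤ 2 * N + 1 ∧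
         q5 - q4 ≤ 2 * N + 1 ∧ q6 - q5 ≤ 2 * N + 1 ∧ q1 + 4 * N + 4 - q6 ≤ 2 * N + 1) →
        False := by
      intro r1 r2 r3 r4 r5 r6 q1 q2 q3 q4 q5 q6 h1 h2 h3 h4 h5 h6 e1 e2 e3 e4 e5 e6 hq
      rcases Set.eq_empty_or_nonempty ((gridV N \ gridB N) \ R) with hemp | ⟨v, hv⟩
      · -- then Rm is empty, so R is empty, contradicting r1 ∈ R
        have hsub2 : ∀ p ∈ Rm, p ∈ R := by
          intro p hp
          by_contra hpR
          exact (Set.eq_empty_iff_forall_notMem.1 hemp p) ⟨⟨hp.1, hp.2.1⟩, hpR⟩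
        have hRmempty : Rm = ∅ := by
          rw [Set.eq_empty_iff_forall_notMem]
          intro p hp
          exact (Set.disjoint_left.1 hdisj (hsub2 p hp)) hp
        have h0 : Rm.ncard = 0 := by rw [hRmempty]; exact Set.ncard_empty _
        have hR0 : R.ncard = 0 := by omega
        have : R = ∅ := (Set.ncard_eq_zero hRfin).1 hR0
        rw [this] at h1
        exact h1
      · obtain ⟨t, htdef⟩ : ∃ t, t = ringPos N v := ⟨_, rfl⟩
        have hvr : 0 ≤ t ∧ t ≤ 4 * N + 3 := by rw [htdef]; exact ringPos_range hv.1
        have hne : ∀ w ∈ R, ringPos N w ≠ t := by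
          intro w hw heq
          have hwv : w = v := ringPos_inj (hRsub hw) hv.1 (heq.trans htdef)
          exact hv.2 (hwv ▸ hw)
        set F : ℤ × ℤ → ℤ := fun w =>
          if t ≤ ringPos N w then ringPos N w - t else ringPos N w - t + (4 * N + 4)
          with hFdef
        have Fdef : ∀ w, F w =
            if t ≤ ringPos N w then ringPos N w - t else ringPos N w - t + (4 * N + 4) :=
          fun w => rfl
        have hFstep : ∀ p q : ℤ × ℤ, p ∈ R → q ∈ R → (gridGraph N).Adj p q →
            F q = F p + 1 ∨ F q = F p - 1 := by
          intro p q hp hq hadj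
          have hcons := ringPos_adj hN (hRsub hp) (hRsub hq) hadj
          have hrp := ringPos_range (hRsub hp)
          have hrq := ringPos_range (hRsub hq)
          have hnp := hne p hp
          have hnq := hne q hq
          rw [Fdef, Fdef]
          split_ifs <;> omega
        have hIcc : ∀ a b : ℤ × ℤ, a ∈ R → b ∈ R → ∀ m : ℤ, F a ≤ m → m ≤ F b →
            ∃ u ∈ R, F u = m := by
          intro a b ha hb m hm1 hm2
          obtain ⟨w⟩ := hrun'.preconnected ⟨a, ha⟩ ⟨b, hb⟩
          obtain ⟨u, hu, hum⟩ := walk_ivt (G := (gridGraph N).induce R)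
            (fun z => F z.1) (fun u v h => hFstep u.1 v.1 u.2 v.2 h) w m
            (Or.inl ⟨hm1, hm2⟩)
          exact ⟨u.1, u.2, hum⟩
        have hcard : ∀ a b : ℤ × ℤ, a ∈ R → b ∈ R → 2 * N + 3 ≤ F b - F a → False := by
          intro a b ha hb hab
          have hsubI : Set.Icc (F a) (F b) ⊆ F '' R := by
            intro m hm
            obtain ⟨u, hu, hum⟩ := hIcc a b ha hb m hm.1 hm.2
            exact ⟨u, hu, hum⟩
          have hI1 : (Set.Icc (F a) (F b)).ncard ≤ (F '' R).ncard :=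
            Set.ncard_le_ncard hsubI (hRfin.image F)
          have hI2 : (F '' R).ncard ≤ R.ncard := Set.ncard_image_le hRfin
          have hI3 : (Set.Icc (F a) (F b)).ncard = (F b + 1 - F a).toNat := by
            rw [← Finset.coe_Icc, Set.ncard_coe_finset, Int.card_Icc]
          omega
        have hn1 : q1 ≠ t := e1 ▸ hne r1 h1
        have hn2 : q2 ≠ t := e2 ▸ hne r2 h2
        have hn3 : q3 ≠ t := e3 ▸ hne r3 h3
        have hn4 : q4 ≠ t := e4 ▸ hne r4 h4
        have hn5 : q5 ≠ t := e5 ▸ hne r5 h5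
        have hn6 : q6 ≠ t := e6 ▸ hne r6 h6
        have hd : 2 * N + 3 ≤ F r1 - F r2 ∨ 2 * N + 3 ≤ F r2 - F r3 ∨
            2 * N + 3 ≤ F r3 - F r4 ∨ 2 * N + 3 ≤ F r4 - F r5 ∨
            2 * N + 3 ≤ F r5 - F r6 ∨ 2 * N + 3 ≤ F r6 - F r1 := by
          rw [Fdef r1, Fdef r2, Fdef r3, Fdef r4, Fdef r5, Fdef r6,
            e1, e2, e3, e4, e5, e6]
          split_ifs <;> omega
        rcases hd with h|h|h|h|h|h
        · exact hcard r2 r1 h2 h1 h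
        · exact hcard r3 r2 h3 h2 h
        · exact hcard r4 r3 h4 h3 h
        · exact hcard r5 r4 h5 h4 h
        · exact hcard r6 r5 h6 h5 h
        · exact hcard r1 r6 h1 h6 h
    -- rule out configurations with at most two corners
    have hget : ∀ a b : ℤ × ℤ, (∀ z ∈ S, z = a ∨ z = b) → False := by
      intro a b h
      have hsub : S ⊆ {a, b} := by
        intro z hz
        rcases h z hz with rfl | rfl
        · exact Set.mem_insert _ _
        · exact Set.mem_insert_of_mem _ rfl
      have h1 := Set.ncard_le_ncard hsub ((Set.finite_singleton b).insert a)
      have h2 : ({a, b} : Set (ℤ × ℤ)).ncard ≤ 2 := by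
        refine le_trans (Set.ncard_insert_le _ _) ?_
        rw [Set.ncard_singleton]
      omega
    by_cases hA : ((1:ℤ),(1:ℤ)) ∈ S <;> by_cases hB : ((N:ℤ),(1:ℤ)) ∈ S <;>
      by_cases hC : ((1:ℤ),(N:ℤ)) ∈ S <;> by_cases hD : ((N:ℤ),(N:ℤ)) ∈ S
    -- TTTT : use A, B, C
    · exact scenario (1,0) ((N:ℤ),0) ((N:ℤ)+1,1) (1,(N:ℤ)+1) (0,(N:ℤ)) (0,1)
        1 N (N+2) (3*N+2) (3*N+4) (4*N+3)
        (hadjR 1 1 1 0 hA (by omega) (by omega) (by omega) (by omega))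
        (hadjR N 1 N 0 hB (by omega) (by omega) (by omega) (by omega))
        (hadjR N 1 (N+1) 1 hB (by omega) (by omega) (by omega) (by omega))
        (hadjR 1 N 1 (N+1) hC (by omega) (by omega) (by omega) (by omega))
        (hadjR 1 N 0 N hC (by omega) (by omega) (by omega) (by omega))
        (hadjR 1 1 0 1 hA (by omega) (by omega) (by omega) (by omega))
        eP1 eP3 eP4 eP7 eP8 eP2 (by omega)
    -- TTTF : use A, B, C
    · exact scenario (1,0) ((N:ℤ),0) ((N:ℤ)+1,1) (1,(N:ℤ)+1) (0,(N:ℤ)) (0,1)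
        1 N (N+2) (3*N+2) (3*N+4) (4*N+3)
        (hadjR 1 1 1 0 hA (by omega) (by omega) (by omega) (by omega))
        (hadjR N 1 N 0 hB (by omega) (by omega) (by omega) (by omega))
        (hadjR N 1 (N+1) 1 hB (by omega) (by omega) (by omega) (by omega))
        (hadjR 1 N 1 (N+1) hC (by omega) (by omega) (by omega) (by omega))
        (hadjR 1 N 0 N hC (by omega) (by omega) (by omega) (by omega))
        (hadjR 1 1 0 1 hA (by omega) (by omega) (by omega) (by omega))
        eP1 eP3 eP4 eP7 eP8 eP2 (by omega)
    -- TTFT : use A, B, D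
    · exact scenario (1,0) ((N:ℤ),0) ((N:ℤ)+1,1) ((N:ℤ)+1,(N:ℤ)) ((N:ℤ),(N:ℤ)+1) (0,1)
        1 N (N+2) (2*N+1) (2*N+3) (4*N+3)
        (hadjR 1 1 1 0 hA (by omega) (by omega) (by omega) (by omega))
        (hadjR N 1 N 0 hB (by omega) (by omega) (by omega) (by omega))
        (hadjR N 1 (N+1) 1 hB (by omega) (by omega) (by omega) (by omega))
        (hadjR N N (N+1) N hD (by omega) (by omega) (by omega) (by omega))
        (hadjR N N N (N+1) hD (by omega) (by omega) (by omega) (by omega))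
        (hadjR 1 1 0 1 hA (by omega) (by omega) (by omega) (by omega))
        eP1 eP3 eP4 eP5 eP6 eP2 (by omega)
    -- TTFF : only A, B
    · exact hget ((1:ℤ),(1:ℤ)) ((N:ℤ),(1:ℤ)) fun z hz => by
        rcases hz.1 with rfl|rfl|rfl|rfl
        · exact Or.inl rfl
        · exact Or.inr rfl
        · exact absurd hz hC
        · exact absurd hz hD
    -- TFTT : use A, C, D
    · exact scenario (1,0) ((N:ℤ)+1,(N:ℤ)) ((N:ℤ),(N:ℤ)+1) (1,(N:ℤ)+1) (0,(N:ℤ)) (0,1)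
        1 (2*N+1) (2*N+3) (3*N+2) (3*N+4) (4*N+3)
        (hadjR 1 1 1 0 hA (by omega) (by omega) (by omega) (by omega))
        (hadjR N N (N+1) N hD (by omega) (by omega) (by omega) (by omega))
        (hadjR N N N (N+1) hD (by omega) (by omega) (by omega) (by omega))
        (hadjR 1 N 1 (N+1) hC (by omega) (by omega) (by omega) (by omega))
        (hadjR 1 N 0 N hC (by omega) (by omega) (by omega) (by omega))
        (hadjR 1 1 0 1 hA (by omega) (by omega) (by omega) (by omega))
        eP1 eP5 eP6 eP7 eP8 eP2 (by omega)
    -- TFTF : only A, C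
    · exact hget ((1:ℤ),(1:ℤ)) ((1:ℤ),(N:ℤ)) fun z hz => by
        rcases hz.1 with rfl|rfl|rfl|rfl
        · exact Or.inl rfl
        · exact absurd hz hB
        · exact Or.inr rfl
        · exact absurd hz hD
    -- TFFT : only A, D
    · exact hget ((1:ℤ),(1:ℤ)) ((N:ℤ),(N:ℤ)) fun z hz => by
        rcases hz.1 with rfl|rfl|rfl|rfl
        · exact Or.inl rfl
        · exact absurd hz hB
        · exact absurd hz hC
        · exact Or.inr rfl
    -- TFFF : only A
    · exact hget ((1:ℤ),(1:ℤ)) ((1:ℤ),(1:ℤ)) fun z hz => by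
        rcases hz.1 with rfl|rfl|rfl|rfl
        · exact Or.inl rfl
        · exact absurd hz hB
        · exact absurd hz hC
        · exact absurd hz hD
    -- FTTT : use B, C, D
    · exact scenario ((N:ℤ),0) ((N:ℤ)+1,1) ((N:ℤ)+1,(N:ℤ)) ((N:ℤ),(N:ℤ)+1) (1,(N:ℤ)+1) (0,(N:ℤ))
        N (N+2) (2*N+1) (2*N+3) (3*N+2) (3*N+4)
        (hadjR N 1 N 0 hB (by omega) (by omega) (by omega) (by omega))
        (hadjR N 1 (N+1) 1 hB (by omega) (by omega) (by omega) (by omega))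
        (hadjR N N (N+1) N hD (by omega) (by omega) (by omega) (by omega))
        (hadjR N N N (N+1) hD (by omega) (by omega) (by omega) (by omega))
        (hadjR 1 N 1 (N+1) hC (by omega) (by omega) (by omega) (by omega))
        (hadjR 1 N 0 N hC (by omega) (by omega) (by omega) (by omega))
        eP3 eP4 eP5 eP6 eP7 eP8 (by omega)
    -- FTTF : only B, C
    · exact hget ((N:ℤ),(1:ℤ)) ((1:ℤ),(N:ℤ)) fun z hz => by
        rcases hz.1 with rfl|rfl|rfl|rfl
        · exact absurd hz hA
        · exact Or.inl rfl
        · exact Or.inr rfl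
        · exact absurd hz hD
    -- FTFT : only B, D
    · exact hget ((N:ℤ),(1:ℤ)) ((N:ℤ),(N:ℤ)) fun z hz => by
        rcases hz.1 with rfl|rfl|rfl|rfl
        · exact absurd hz hA
        · exact Or.inl rfl
        · exact absurd hz hC
        · exact Or.inr rfl
    -- FTFF : only B
    · exact hget ((N:ℤ),(1:ℤ)) ((N:ℤ),(1:ℤ)) fun z hz => by
        rcases hz.1 with rfl|rfl|rfl|rfl
        · exact absurd hz hA
        · exact Or.inl rfl
        · exact absurd hz hC
        · exact absurd hz hD
    -- FFTT : only C, D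
    · exact hget ((1:ℤ),(N:ℤ)) ((N:ℤ),(N:ℤ)) fun z hz => by
        rcases hz.1 with rfl|rfl|rfl|rfl
        · exact absurd hz hA
        · exact absurd hz hB
        · exact Or.inl rfl
        · exact Or.inr rfl
    -- FFTF : only C
    · exact hget ((1:ℤ),(N:ℤ)) ((1:ℤ),(N:ℤ)) fun z hz => by
        rcases hz.1 with rfl|rfl|rfl|rfl
        · exact absurd hz hA
        · exact absurd hz hB
        · exact Or.inl rfl
        · exact absurd hz hD
    -- FFFT : only D
    · exact hget ((N:ℤ),(N:ℤ)) ((N:ℤ),(N:ℤ)) fun z hz => by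
        rcases hz.1 with rfl|rfl|rfl|rfl
        · exact absurd hz hA
        · exact absurd hz hB
        · exact absurd hz hC
        · exact Or.inl rfl
    -- FFFF : none
    · exact hget ((1:ℤ),(1:ℤ)) ((1:ℤ),(1:ℤ)) fun z hz => by
        rcases hz.1 with rfl|rfl|rfl|rfl
        · exact absurd hz hA
        · exact absurd hz hB
        · exact absurd hz hC
        · exact absurd hz hD
end

section
/- (Forward Convergence on cut-rectangles, base setup) Consider the difference-message dynamics on the (N+2)×(N+2) grid. Suppose for all b with 1≤b≤β and all n≥0, m^n_{E(0,b)} = 1, and for all a with 1≤a≤α and all n≥0, m^n_{N(a,0)} = 1 (messages entering the rectangle R = {1,...,α}×{1,...,β} from the west and south are identically +1). Then for every D≥1, every (a,b)∈R with (a-1)+(b-1) ≤ D-1, and every n ≥ D, the messages m^n_{E(a,b)} and m^n_{N(a,b)} equal +1, where E(a,b) denotes the directed edge (a,b)→(a+1,b) and N(a,b) denotes (a,b)→(a,b+1). -/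
/-! Messages at time `n` are computed from messages at time `n - 1`, so `+1` spreads into the
rectangle one anti-diagonal per step: once the west and south messages into a site are `+1`,
the third incoming message lies in `{-1, 0, 1}` and cannot cancel them, so the site sends `+1`
both east and north at the next step. -/

theorem Int.sign_one_add_one_add {z : ℤ} (hz : -1 ≤ z) : (1 + 1 + z).sign = 1 :=
  Int.sign_eq_one_of_pos (by omega)

theorem east_north_eq_one_of_lt
    (N : ℕ) (α β : ℤ) (hαN : α ≤ N) (hβN : β ≤ N)
    (m : ℕ → (ℤ × ℤ) → (ℤ × ℤ) → ℤ) (hlow : ∀ n p q, -1 ≤ m n p q)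
    (hupE : ∀ a b : ℤ, 1 ≤ a → a ≤ N → 1 ≤ b → b ≤ N → ∀ n : ℕ, 0 < n →
      m n (a, b) (a + 1, b) =
        Int.sign (m (n-1) (a - 1, b) (a, b) + m (n-1) (a, b - 1) (a, b) +
          m (n-1) (a, b + 1) (a, b)))
    (hupN : ∀ a b : ℤ, 1 ≤ a → a ≤ N → 1 ≤ b → b ≤ N → ∀ n : ℕ, 0 < n →
      m n (a, b) (a, b + 1) =
        Int.sign (m (n-1) (a - 1, b) (a, b) + m (n-1) (a, b - 1) (a, b) +
          m (n-1) (a + 1, b) (a, b)))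
    (hW : ∀ b : ℤ, 1 ≤ b → b ≤ β → ∀ n : ℕ, m n (0, b) (1, b) = 1)
    (hS : ∀ a : ℤ, 1 ≤ a → a ≤ α → ∀ n : ℕ, m n (a, 0) (a, 1) = 1) (n : ℕ) :
    ∀ a b : ℤ, 1 ≤ a → a ≤ α → 1 ≤ b → b ≤ β → (a - 1) + (b - 1) < n →
      m n (a, b) (a + 1, b) = 1 ∧ m n (a, b) (a, b + 1) = 1 := by
  induction n with
  | zero => intros; omega
  | succ n ih =>
    intro a b ha haα hb hbβ hab
    have hwest : m n (a - 1, b) (a, b) = 1 := by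
      obtain rfl | ha' := eq_or_lt_of_le ha
      · exact hW b hb hbβ n
      · simpa using (ih (a - 1) b (by omega) (by omega) hb hbβ (by omega)).1
    have hsouth : m n (a, b - 1) (a, b) = 1 := by
      obtain rfl | hb' := eq_or_lt_of_le hb
      · exact hS a ha haα n
      · simpa using (ih a (b - 1) ha haα (by omega) (by omega) (by omega)).2
    rw [hupE a b ha (haα.trans hαN) hb (hbβ.trans hβN) (n + 1) n.succ_pos,
      hupN a b ha (haα.trans hαN) hb (hbβ.trans hβN) (n + 1) n.succ_pos, Nat.add_sub_cancel,
      hwest, hsouth]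
    exact ⟨Int.sign_one_add_one_add (hlow _ _ _), Int.sign_one_add_one_add (hlow _ _ _)⟩

theorem forward_convergence_cut_rectangle_general
    (N : ℕ) (α β : ℤ) (hαN : α ≤ N) (hβN : β ≤ N)
    (m : ℕ → (ℤ × ℤ) → (ℤ × ℤ) → ℤ)
    -- all messages lie in {-1, 0, 1}
    (hrange : ∀ n p q, m n p q = -1 ∨ m n p q = 0 ∨ m n p q = 1)
    -- east-message update for interior senders
    (hupE : ∀ a b : ℤ, 1 ≤ a → a ≤ N → 1 ≤ b → b ≤ N → ∀ n : ℕ, 0 < n →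
      m n (a, b) (a + 1, b) =
        Int.sign (m (n-1) (a - 1, b) (a, b) + m (n-1) (a, b - 1) (a, b) +
          m (n-1) (a, b + 1) (a, b)))
    -- north-message update for interior senders
    (hupN : ∀ a b : ℤ, 1 ≤ a → a ≤ N → 1 ≤ b → b ≤ N → ∀ n : ℕ, 0 < n →
      m n (a, b) (a, b + 1) =
        Int.sign (m (n-1) (a - 1, b) (a, b) + m (n-1) (a, b - 1) (a, b) +
          m (n-1) (a + 1, b) (a, b)))
    -- messages entering from the west are +1
    (hW : ∀ b : ℤ, 1 ≤ b → b ≤ β → ∀ n : ℕ, m n (0, b) (1, b) = 1)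
    -- messages entering from the south are +1
    (hS : ∀ a : ℤ, 1 ≤ a → a ≤ α → ∀ n : ℕ, m n (a, 0) (a, 1) = 1) :
    ∀ D : ℕ, 1 ≤ D → ∀ a b : ℤ, 1 ≤ a → a ≤ α → 1 ≤ b → b ≤ β →
      (a - 1) + (b - 1) ≤ (D : ℤ) - 1 → ∀ n : ℕ, D ≤ n →
        m n (a, b) (a + 1, b) = 1 ∧ m n (a, b) (a, b + 1) = 1 := by
  have hlow : ∀ n p q, -1 ≤ m n p q := fun n p q => by
    rcases hrange n p q with h | h | h <;> omega
  intro D _ a b ha haα hb hbβ hab n hn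
  exact east_north_eq_one_of_lt N α β hαN hβN m hlow hupE hupN hW hS n a b ha haα hb hbβ
    (by omega)

/-- Forward convergence on cut-rectangles: if the difference messages entering the
rectangle `{1,…,α} × {1,…,β}` from the west and south are identically `+1`, then for
every `D ≥ 1`, every site `(a,b)` of the rectangle at L¹-distance at most `D-1` from
`(1,1)` sends east and north messages equal to `+1` at all times `n ≥ D`. -/
theorem forward_convergence_cut_rectangle
    (N : ℕ) (α β : ℤ) (hα : 1 ≤ α) (hαN : α ≤ N) (hβ : 1 ≤ β) (hβN : β ≤ N)
    (m : ℕ → (ℤ × ℤ) → (ℤ × ℤ) → ℤ)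
    -- all messages lie in {-1, 0, 1}
    (hrange : ∀ n p q, m n p q = -1 ∨ m n p q = 0 ∨ m n p q = 1)
    -- east-message update for interior senders
    (hupE : ∀ a b : ℤ, 1 ≤ a → a ≤ N → 1 ≤ b → b ≤ N → ∀ n : ℕ, 0 < n →
      m n (a, b) (a + 1, b) =
        Int.sign (m (n-1) (a - 1, b) (a, b) + m (n-1) (a, b - 1) (a, b) +
          m (n-1) (a, b + 1) (a, b)))
    -- north-message update for interior senders
    (hupN : ∀ a b : ℤ, 1 ≤ a → a ≤ N → 1 ≤ b → b ≤ N → ∀ n : ℕ, 0 < n →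
      m n (a, b) (a, b + 1) =
        Int.sign (m (n-1) (a - 1, b) (a, b) + m (n-1) (a, b - 1) (a, b) +
          m (n-1) (a + 1, b) (a, b)))
    -- messages entering from the west are +1
    (hW : ∀ b : ℤ, 1 ≤ b → b ≤ β → ∀ n : ℕ, m n (0, b) (1, b) = 1)
    -- messages entering from the south are +1
    (hS : ∀ a : ℤ, 1 ≤ a → a ≤ α → ∀ n : ℕ, m n (a, 0) (a, 1) = 1) :
    ∀ D : ℕ, 1 ≤ D → ∀ a b : ℤ, 1 ≤ a → a ≤ α → 1 ≤ b → b ≤ β →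
      (a - 1) + (b - 1) ≤ (D : ℤ) - 1 → ∀ n : ℕ, D ≤ n →
        m n (a, b) (a + 1, b) = 1 ∧ m n (a, b) (a, b + 1) = 1 :=
  forward_convergence_cut_rectangle_general N α β hαN hβN m hrange hupE hupN hW hS
end

section
/- (Local solutions, boundary of a monochromatic region) Suppose site i∈B takes value +1 in all global MAP solutions, but there exists a global solution in which some neighbor j of i takes value -1. Then exactly one neighbor of i is -1 in that solution, and O*_i(-1) = O*_i(+1) + 2, i.e., o*_i = +2. -/
-- ===== auxiliary development =====

lemma gridV_finite (N : ℕ) : (gridV N).Finite := by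
  have h : gridV N ⊆ (Set.Icc 0 (N+1 : ℤ)) ×ˢ (Set.Icc 0 (N+1 : ℤ)) := by
    intro p hp; exact ⟨⟨hp.1, hp.2.1⟩, hp.2.2.1, hp.2.2.2⟩
  exact ((Set.finite_Icc _ _).prod (Set.finite_Icc _ _)).subset h

lemma gridB_subset_gridV (N : ℕ) : gridB N ⊆ gridV N := by
  intro p hp
  obtain ⟨h1, h2, h3, h4⟩ := hp
  exact ⟨by omega, by omega, by omega, by omega⟩

lemma edgeSet_finite (N : ℕ) : ((gridGraph N).edgeSet).Finite := by
  have h : (gridGraph N).edgeSet ⊆ (fun p : (ℤ × ℤ) × ℤ × ℤ => s(p.1, p.2)) '' ((gridV N) ×ˢ (gridV N)) := by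
    intro e he
    induction e using Sym2.ind with
    | _ u v =>
      rw [SimpleGraph.mem_edgeSet] at he
      exact ⟨(u, v), ⟨he.1, he.2.1⟩, rfl⟩
  exact (((gridV_finite N).prod (gridV_finite N)).image _).subset h

def oddSet (N : ℕ) (y : ℤ × ℤ → ℤ) : Set (Sym2 (ℤ × ℤ)) :=
  {e ∈ (gridGraph N).edgeSet | (∃ u ∈ e, u ∈ gridB N) ∧ isOdd y e}

lemma oddBonds_eq (N : ℕ) (y : ℤ × ℤ → ℤ) : oddBonds N y = (oddSet N y).ncard := rfl

lemma oddSet_finite (N : ℕ) (y : ℤ × ℤ → ℤ) : (oddSet N y).Finite :=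
  (edgeSet_finite N).subset (Set.sep_subset _ _)

def nbrsF (p : ℤ × ℤ) : Finset (ℤ × ℤ) :=
  {(p.1 + 1, p.2), (p.1 - 1, p.2), (p.1, p.2 + 1), (p.1, p.2 - 1)}

lemma card_nbrsF (p : ℤ × ℤ) : (nbrsF p).card = 4 := by
  have : ∀ a b : ℤ × ℤ, a.1 ≠ b.1 ∨ a.2 ≠ b.2 → a ≠ b := by
    intro a b h hab; cases hab; simp at h
  rw [nbrsF]
  rw [Finset.card_insert_of_notMem (by simp [Prod.ext_iff] <;> omega),
    Finset.card_insert_of_notMem (by simp [Prod.ext_iff] <;> omega),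
    Finset.card_insert_of_notMem (by simp [Prod.ext_iff] <;> omega)]
  rfl

lemma mem_nbrsF_ne (p q : ℤ × ℤ) (h : q ∈ nbrsF p) : q ≠ p := by
  simp [nbrsF, Prod.ext_iff] at h
  rintro rfl
  rcases h with h | h | h | h <;> omega

lemma adj_iff {N : ℕ} {p : ℤ × ℤ} (hp : p ∈ gridB N) (q : ℤ × ℤ) :
    (gridGraph N).Adj p q ↔ q ∈ nbrsF p := by
  obtain ⟨h1, h2, h3, h4⟩ := hp
  constructor
  · rintro ⟨-, hqV, habs⟩
    rcases abs_cases (p.1 - q.1) with ⟨e1, _⟩ | ⟨e1, _⟩ <;>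
      rcases abs_cases (p.2 - q.2) with ⟨e2, _⟩ | ⟨e2, _⟩ <;>
      rw [e1, e2] at habs <;>
      simp [nbrsF, Prod.ext_iff] <;> omega
  · intro hq
    have hpV : p ∈ gridV N := ⟨by omega, by omega, by omega, by omega⟩
    simp [nbrsF, Prod.ext_iff] at hq
    rcases hq with ⟨hq1, hq2⟩ | ⟨hq1, hq2⟩ | ⟨hq1, hq2⟩ | ⟨hq1, hq2⟩ <;>
      refine ⟨hpV, ⟨by omega, by omega, by omega, by omega⟩, ?_⟩ <;>
      rw [hq1, hq2] <;> simp

lemma isOdd_mk (y : ℤ × ℤ → ℤ) (u v : ℤ × ℤ) : isOdd y s(u, v) ↔ y u ≠ y v := Iff.rfl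

lemma isOdd_update_not_mem {y : ℤ × ℤ → ℤ} {p : ℤ × ℤ} {v : ℤ} {e : Sym2 (ℤ × ℤ)}
    (h : p ∉ e) : isOdd (Function.update y p v) e ↔ isOdd y e := by
  induction e using Sym2.ind with
  | _ u w =>
    rw [Sym2.mem_iff, not_or] at h
    rw [isOdd_mk, isOdd_mk, Function.update_of_ne (fun hh => h.1 hh.symm),
      Function.update_of_ne (fun hh => h.2 hh.symm)]

lemma neg_ne_iff {a b : ℤ} (ha : a = 1 ∨ a = -1) (hb : b = 1 ∨ b = -1) :
    (-a ≠ b) ↔ a = b := by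
  rcases ha with rfl | rfl <;> rcases hb with rfl | rfl <;> norm_num

/-- The incident part of the odd set at an interior vertex `p`. -/
lemma oddSet_incident (N : ℕ) (y : ℤ × ℤ → ℤ) (p : ℤ × ℤ) (hp : p ∈ gridB N) :
    {e ∈ oddSet N y | p ∈ e} =
      (fun q => s(p, q)) '' ↑((nbrsF p).filter (fun q => y p ≠ y q)) := by
  ext e
  constructor
  · rintro ⟨⟨he, -, hodd⟩, hpe⟩
    induction e using Sym2.ind with
    | _ u w =>
      rw [SimpleGraph.mem_edgeSet] at he
      rw [Sym2.mem_iff] at hpe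
      rcases hpe with rfl | rfl
      · refine ⟨w, ?_, rfl⟩
        simp only [Finset.coe_filter, Set.mem_setOf_eq]
        exact ⟨(adj_iff hp w).1 he, hodd⟩
      · refine ⟨u, ?_, ?_⟩
        · simp only [Finset.coe_filter, Set.mem_setOf_eq]
          refine ⟨(adj_iff hp u).1 he.symm, ?_⟩
          exact fun hh => hodd hh.symm
        · exact Sym2.eq_swap
  · rintro ⟨q, hq, rfl⟩
    simp only [Finset.coe_filter, Set.mem_setOf_eq] at hq
    refine ⟨⟨(adj_iff hp q).2 hq.1, ⟨p, Sym2.mem_mk_left _ _, hp⟩, hq.2⟩, Sym2.mem_mk_left _ _⟩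

lemma ncard_image_mk (p : ℤ × ℤ) (s : Finset (ℤ × ℤ)) (hs : s ⊆ nbrsF p) :
    ((fun q => s(p, q)) '' (s : Set (ℤ × ℤ))).ncard = s.card := by
  rw [Set.ncard_image_of_injOn, Set.ncard_coe_finset]
  intro a ha b hb hab
  simp only [Sym2.eq, Sym2.rel_iff', Prod.mk.injEq, Prod.swap_prod_mk] at hab
  rcases hab with ⟨-, h⟩ | ⟨h1, h2⟩
  · exact h
  · exact h2.trans h1

/-- Flip lemma: flipping an interior site changes the odd-bond count by `4 - 2k`. -/
lemma flip_oddBonds (N : ℕ) (y : ℤ × ℤ → ℤ) (p : ℤ × ℤ) (hp : p ∈ gridB N)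
    (hnb : ∀ q ∈ nbrsF p, y q = 1 ∨ y q = -1) (hyp : y p = 1 ∨ y p = -1) :
    oddBonds N (Function.update y p (-(y p))) +
        2 * ((nbrsF p).filter (fun q => y p ≠ y q)).card
      = oddBonds N y + 4 := by
  set y' := Function.update y p (-(y p)) with hy'
  have hy'p : y' p = -(y p) := Function.update_self _ _ _
  have hy'q : ∀ q, q ≠ p → y' q = y q := fun q hq => Function.update_of_ne hq _ _
  -- decomposition of both odd sets
  have hdecomp : ∀ z : ℤ × ℤ → ℤ,
      (oddSet N z).ncard = ({e ∈ oddSet N z | p ∈ e}).ncard + ({e ∈ oddSet N z | p ∉ e}).ncard := by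
    intro z
    have h1 : {e ∈ oddSet N z | p ∈ e} = oddSet N z ∩ {e | p ∈ e} := rfl
    have h2 : {e ∈ oddSet N z | p ∉ e} = oddSet N z \ {e | p ∈ e} := by
      ext e; simp [oddSet, Set.mem_diff, and_assoc]
      tauto
    rw [h1, h2, Set.ncard_inter_add_ncard_diff_eq_ncard _ _ (oddSet_finite N z)]
  -- the non-incident parts agree
  have hrest : {e ∈ oddSet N y' | p ∉ e} = {e ∈ oddSet N y | p ∉ e} := by
    ext e
    simp only [Set.mem_setOf_eq, oddSet, Set.mem_sep_iff]
    constructor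
    · rintro ⟨⟨h1, h2, h3⟩, h4⟩
      exact ⟨⟨h1, h2, (isOdd_update_not_mem h4).1 h3⟩, h4⟩
    · rintro ⟨⟨h1, h2, h3⟩, h4⟩
      exact ⟨⟨h1, h2, (isOdd_update_not_mem h4).2 h3⟩, h4⟩
  -- incident part for y'
  have hinc' : {e ∈ oddSet N y' | p ∈ e} =
      (fun q => s(p, q)) '' ↑((nbrsF p).filter (fun q => y p = y q)) := by
    rw [oddSet_incident N y' p hp]
    have hfilter : ((nbrsF p).filter (fun q => y' p ≠ y' q)) =
        ((nbrsF p).filter (fun q => y p = y q)) := by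
      apply Finset.filter_congr
      intro q hq
      rw [hy'p, hy'q q (mem_nbrsF_ne p q hq)]
      exact neg_ne_iff hyp (hnb q hq)
    rw [hfilter]
  have hinc : {e ∈ oddSet N y | p ∈ e} =
      (fun q => s(p, q)) '' ↑((nbrsF p).filter (fun q => y p ≠ y q)) :=
    oddSet_incident N y p hp
  have hcards : ((nbrsF p).filter (fun q => y p = y q)).card +
      ((nbrsF p).filter (fun q => y p ≠ y q)).card = 4 := by
    rw [Finset.card_filter_add_card_filter_not]
    exact card_nbrsF p
  rw [oddBonds_eq, oddBonds_eq, hdecomp y', hdecomp y, hrest, hinc', hinc,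
    ncard_image_mk p _ (Finset.filter_subset _ _), ncard_image_mk p _ (Finset.filter_subset _ _)]
  omega

lemma config_values {N : ℕ} {x y : ℤ × ℤ → ℤ} (hx : isBoundaryConfig N x)
    (hy : isConfig N x y) : ∀ q ∈ gridV N, y q = 1 ∨ y q = -1 := by
  intro q hq
  by_cases h : q ∈ gridB N
  · exact hy.2 q h
  · rw [hy.1 q h]; exact hx q hq h

lemma nbrs_mem_gridV {N : ℕ} {p : ℤ × ℤ} (hp : p ∈ gridB N) {q : ℤ × ℤ}
    (hq : q ∈ nbrsF p) : q ∈ gridV N :=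
  ((adj_iff hp q).2 hq).2.1

lemma flip_isConfig {N : ℕ} {x y : ℤ × ℤ → ℤ} (hy : isConfig N x y) {p : ℤ × ℤ}
    (hp : p ∈ gridB N) (v : ℤ) (hv : v = 1 ∨ v = -1) :
    isConfig N x (Function.update y p v) := by
  constructor
  · intro q hq
    rw [Function.update_of_ne (fun h => hq (by rw [h]; exact hp))]
    exact hy.1 q hq
  · intro q hq
    by_cases h : q = p
    · subst h; rw [Function.update_self]; exact hv
    · rw [Function.update_of_ne h]; exact hy.2 q hq

lemma diff_finite (N : ℕ) (y z : ℤ × ℤ → ℤ) : {p | p ∈ gridB N ∧ y p ≠ z p}.Finite :=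
  ((gridV_finite N).subset (gridB_subset_gridV N)).subset (fun p hp => hp.1)

lemma parity_oddBonds (N : ℕ) (x : ℤ × ℤ → ℤ) (hx : isBoundaryConfig N x) :
    ∀ n (y z : ℤ × ℤ → ℤ), isConfig N x y → isConfig N x z →
      {p | p ∈ gridB N ∧ y p ≠ z p}.ncard = n →
      oddBonds N y % 2 = oddBonds N z % 2 := by
  intro n
  induction n with
  | zero =>
    intro y z hy hz hn
    have hemp : {p | p ∈ gridB N ∧ y p ≠ z p} = ∅ :=
      (Set.ncard_eq_zero (diff_finite N y z)).1 hn
    have hyz : y = z := by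
      funext p
      by_cases h : p ∈ gridB N
      · by_contra hne
        exact (Set.eq_empty_iff_forall_notMem.1 hemp p) ⟨h, hne⟩
      · rw [hy.1 p h, hz.1 p h]
    rw [hyz]
  | succ n ih =>
    intro y z hy hz hn
    have hne : {p | p ∈ gridB N ∧ y p ≠ z p}.Nonempty := by
      rw [← Set.ncard_pos (diff_finite N y z)] at *
      omega
    obtain ⟨p, hpB, hpne⟩ := hne
    have hyp1 : y p = -(z p) := by
      rcases hy.2 p hpB with h1 | h1 <;> rcases hz.2 p hpB with h2 | h2 <;>
        rw [h1, h2] <;>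
        first
          | exact absurd (h1.trans h2.symm) hpne
          | norm_num
    set z' := Function.update z p (y p) with hz'def
    have hz' : isConfig N x z' := flip_isConfig hz hpB _ (hy.2 p hpB)
    have hflip := flip_oddBonds N z p hpB
      (fun q hq => config_values hx hz q (nbrs_mem_gridV hpB hq)) (hz.2 p hpB)
    have hz'eq : z' = Function.update z p (-(z p)) := by rw [hz'def, hyp1]
    have hdiff : {q | q ∈ gridB N ∧ y q ≠ z' q} = {q | q ∈ gridB N ∧ y q ≠ z q} \ {p} := by
      ext q
      by_cases h : q = p
      · subst h
        simp [hz'def, Function.update_self]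
      · simp only [Set.mem_setOf_eq, Set.mem_diff, Set.mem_singleton_iff, hz'def,
          Function.update_of_ne h]
        tauto
    have hncard : {q | q ∈ gridB N ∧ y q ≠ z' q}.ncard = n := by
      rw [hdiff, Set.ncard_diff_singleton_of_mem
        (show p ∈ {q | q ∈ gridB N ∧ y q ≠ z q} from ⟨hpB, hpne⟩), hn]
      omega
    have h1 := ih y z' hy hz' hncard
    rw [← hz'eq] at hflip
    omega


/-- Local solutions, boundary of a monochromatic region: if site `i` takes value `+1`
in all global MAP solutions, but in some global solution `y` a neighbor `j` of `i`
takes value `-1`, then exactly one neighbor of `i` is `-1` in `y`, and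
`O*_i(-1) = O*_i(+1) + 2`, i.e. the local solution at `i` is `+2`. -/
theorem local_solution_boundary_region (N : ℕ) (x : ℤ × ℤ → ℤ)
    (hx : isBoundaryConfig N x)
    (i : ℤ × ℤ) (hi : i ∈ gridB N)
    (hall : ∀ y, isGlobalSol N x y → y i = 1)
    (y : ℤ × ℤ → ℤ) (hy : isGlobalSol N x y)
    (j : ℤ × ℤ) (hj : (gridGraph N).Adj i j) (hjm : y j = -1) :
    {q | (gridGraph N).Adj i q ∧ y q = -1}.ncard = 1 ∧
      Ostar N x i (-1) = Ostar N x i 1 + 2 := by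
  obtain ⟨hyc, hyO⟩ := hy
  set O := OstarGlobal N x with hOdef
  have hyi : y i = 1 := hall y ⟨hyc, hyO⟩
  have hnbvals : ∀ q ∈ nbrsF i, y q = 1 ∨ y q = -1 :=
    fun q hq => config_values hx hyc q (nbrs_mem_gridV hi hq)
  set k := ((nbrsF i).filter (fun q => y i ≠ y q)).card with hkdef
  have hflip := flip_oddBonds N y i hi hnbvals (Or.inl hyi)
  rw [hyO, ← hkdef] at hflip
  set y' := Function.update y i (-(y i)) with hy'def
  have hy'c : isConfig N x y' := flip_isConfig hyc hi _ (Or.inr (by rw [hyi]))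
  have hy'i : y' i = -1 := by rw [hy'def, Function.update_self, hyi]
  have hO_le : O ≤ oddBonds N y' := Nat.sInf_le ⟨y', hy'c, rfl⟩
  have hjk : j ∈ (nbrsF i).filter (fun q => y i ≠ y q) := by
    rw [Finset.mem_filter]
    exact ⟨(adj_iff hi j).1 hj, by rw [hyi, hjm]; norm_num⟩
  have hk1 : 1 ≤ k := Finset.card_pos.2 ⟨j, hjk⟩
  have hkne2 : k ≠ 2 := by
    intro h2
    have hglob : oddBonds N y' = O := by omega
    have h1 := hall y' ⟨hy'c, hglob⟩
    rw [hy'i] at h1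
    norm_num at h1
  have hkeq : k = 1 := by omega
  have hset : {q | (gridGraph N).Adj i q ∧ y q = -1} =
      ↑((nbrsF i).filter (fun q => y i ≠ y q)) := by
    ext q
    simp only [Set.mem_setOf_eq, Finset.coe_filter]
    constructor
    · rintro ⟨hadj, hm⟩
      exact ⟨(adj_iff hi q).1 hadj, by rw [hyi, hm]; norm_num⟩
    · rintro ⟨hq, hne⟩
      refine ⟨(adj_iff hi q).2 hq, ?_⟩
      rcases hnbvals q hq with h | h
      · rw [hyi] at hne
        exact absurd h.symm hne
      · exact h
  have hA : {q | (gridGraph N).Adj i q ∧ y q = -1}.ncard = 1 := by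
    rw [hset, Set.ncard_coe_finset, ← hkdef, hkeq]
  have hOs1 : Ostar N x i 1 = O := by
    apply le_antisymm
    · exact Nat.sInf_le ⟨y, hyc, hyi, hyO⟩
    · apply le_csInf
      · exact ⟨O, y, hyc, hyi, hyO⟩
      rintro b ⟨z, hzc, -, hzb⟩
      exact Nat.sInf_le ⟨z, hzc, hzb⟩
  have hy'O : oddBonds N y' = O + 2 := by omega
  have hOsm : Ostar N x i (-1) = O + 2 := by
    apply le_antisymm
    · exact Nat.sInf_le ⟨y', hy'c, hy'i, hy'O⟩
    · apply le_csInf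
      · exact ⟨O + 2, y', hy'c, hy'i, hy'O⟩
      rintro b ⟨z, hzc, hzi, rfl⟩
      have hbO : O ≤ oddBonds N z := Nat.sInf_le ⟨z, hzc, rfl⟩
      have hbne : oddBonds N z ≠ O := by
        intro h
        have h1 := hall z ⟨hzc, h⟩
        rw [hzi] at h1
        norm_num at h1
      have hpar := parity_oddBonds N x hx _ z y hzc hyc rfl
      rw [hyO] at hpar
      omega
  rw [hOs1, hOsm]
  exact ⟨hA, rfl⟩
end

section
/- (Main Theorem, case C = ∅, negative inner region) On the (N+2)×(N+2) grid with one-run boundary where the positive run is contained in the west side (all +1 boundary sites have first coordinate 0, forming a vertical run from (0,β₁) to (0,β₂) with β₁≤β₂), and no corner of B has two +1 boundary neighbors: for all n ≥ 2N and every interior site (a,b) with a > 1, or b > β₂, or b < β₁, the estimate ô^n_{(a,b)} = Σ of the four incoming difference messages equals -4. -/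
/-- The four lattice neighbors of a point. -/
def nbrs (p : ℤ × ℤ) : Finset (ℤ × ℤ) :=
  {(p.1 + 1, p.2), (p.1 - 1, p.2), (p.1, p.2 + 1), (p.1, p.2 - 1)}

/-- Main theorem, case `C = ∅`, negative inner region: with the positive run
`{(0,b) : β₁ ≤ b ≤ β₂}` on the west boundary and all other boundary sites `-1`, for
all `n ≥ 2N` the estimate at every interior site `(a,b)` with `a > 1`, `b > β₂`, or
`b < β₁` equals `-4`. -/
theorem main_caseC0_inner_region
    (N : ℕ) (hN : 1 ≤ N) (β₁ β₂ : ℤ) (hβ₁ : 1 ≤ β₁) (hββ : β₁ ≤ β₂) (hβ₂ : β₂ ≤ N)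
    (x : ℤ × ℤ → ℤ) (hxpm : isBoundaryConfig N x)
    (hx1 : ∀ p ∈ gridV N, p ∉ gridB N →
      (x p = 1 ↔ (p.1 = 0 ∧ β₁ ≤ p.2 ∧ p.2 ≤ β₂)))
    (m : ℕ → (ℤ × ℤ) → (ℤ × ℤ) → ℤ)
    -- boundary condition: boundary senders always send their boundary value
    (hbd : ∀ j ∈ gridV N, j ∉ gridB N → ∀ i ∈ nbrs j, ∀ n : ℕ, m n j i = x j)
    -- initialization: interior senders start at 0
    (h0 : ∀ j ∈ gridB N, ∀ i ∈ nbrs j, m 0 j i = 0)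
    -- sign update for interior senders
    (hup : ∀ j ∈ gridB N, ∀ i ∈ nbrs j, ∀ n : ℕ, 0 < n →
      m n j i = Int.sign (∑ k ∈ nbrs j \ {i}, m (n-1) k j))
    :
    ∀ n : ℕ, 2 * N ≤ n → ∀ a b : ℤ, (a, b) ∈ gridB N →
      (1 < a ∨ β₂ < b ∨ b < β₁) →
      m n (a - 1, b) (a, b) + m n (a, b - 1) (a, b) +
        m n (a + 1, b) (a, b) + m n (a, b + 1) (a, b) = -4 := by
  -- sign helpers
  have hsign_le : ∀ s : ℤ, s.sign ≤ 1 := by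
    intro s
    rcases lt_trichotomy s 0 with h|h|h
    · simp [Int.sign_eq_neg_one_iff_neg.mpr h]
    · simp [h]
    · simp [Int.sign_eq_one_iff_pos.mpr h]
  have hsign_neg : ∀ s : ℤ, s < 0 → s.sign = -1 := fun s h =>
    Int.sign_eq_neg_one_iff_neg.mpr h
  -- membership helpers
  have memV : ∀ u v : ℤ, 0 ≤ u → u ≤ N+1 → 0 ≤ v → v ≤ N+1 → (u,v) ∈ gridV N :=
    fun u v h1 h2 h3 h4 => ⟨h1,h2,h3,h4⟩
  have memB : ∀ u v : ℤ, 1 ≤ u → u ≤ N → 1 ≤ v → v ≤ N → (u,v) ∈ gridB N :=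
    fun u v h1 h2 h3 h4 => ⟨h1,h2,h3,h4⟩
  have notB : ∀ u v : ℤ, (u < 1 ∨ (N:ℤ) < u ∨ v < 1 ∨ (N:ℤ) < v) → (u,v) ∉ gridB N :=
    fun u v h hc => by obtain ⟨c1,c2,c3,c4⟩ := hc; omega
  have memN : ∀ u v p q : ℤ,
      (p = u+1 ∧ q = v ∨ p = u-1 ∧ q = v ∨ p = u ∧ q = v+1 ∨ p = u ∧ q = v-1) →
      (p,q) ∈ nbrs (u,v) := by
    intro u v p q h
    simp only [nbrs, Finset.mem_insert, Finset.mem_singleton, Prod.ext_iff]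
    exact h
  -- sum decompositions
  have hsumW : ∀ (f : ℤ×ℤ → ℤ) (a b : ℤ),
      ∑ k ∈ nbrs (a,b) \ {(a-1,b)}, f k = f (a+1,b) + f (a,b+1) + f (a,b-1) := by
    intro f a b
    have h : nbrs (a,b) \ {(a-1,b)} = {(a+1,b),(a,b+1),(a,b-1)} := by
      ext ⟨u,v⟩
      simp [nbrs, Prod.ext_iff]
      try omega
    rw [h, Finset.sum_insert (by simp [Prod.ext_iff]; try omega),
        Finset.sum_insert (by simp [Prod.ext_iff]; try omega), Finset.sum_singleton, add_assoc]
  have hsumE : ∀ (f : ℤ×ℤ → ℤ) (a b : ℤ),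
      ∑ k ∈ nbrs (a,b) \ {(a+1,b)}, f k = f (a-1,b) + f (a,b+1) + f (a,b-1) := by
    intro f a b
    have h : nbrs (a,b) \ {(a+1,b)} = {(a-1,b),(a,b+1),(a,b-1)} := by
      ext ⟨u,v⟩
      simp [nbrs, Prod.ext_iff]
      try omega
    rw [h, Finset.sum_insert (by simp [Prod.ext_iff]; try omega),
        Finset.sum_insert (by simp [Prod.ext_iff]; try omega), Finset.sum_singleton, add_assoc]
  have hsumN : ∀ (f : ℤ×ℤ → ℤ) (a b : ℤ),
      ∑ k ∈ nbrs (a,b) \ {(a,b+1)}, f k = f (a+1,b) + f (a-1,b) + f (a,b-1) := by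
    intro f a b
    have h : nbrs (a,b) \ {(a,b+1)} = {(a+1,b),(a-1,b),(a,b-1)} := by
      ext ⟨u,v⟩
      simp [nbrs, Prod.ext_iff]
      try omega
    rw [h, Finset.sum_insert (by simp [Prod.ext_iff]; try omega),
        Finset.sum_insert (by simp [Prod.ext_iff]; try omega), Finset.sum_singleton, add_assoc]
  have hsumS : ∀ (f : ℤ×ℤ → ℤ) (a b : ℤ),
      ∑ k ∈ nbrs (a,b) \ {(a,b-1)}, f k = f (a+1,b) + f (a-1,b) + f (a,b+1) := by
    intro f a b
    have h : nbrs (a,b) \ {(a,b-1)} = {(a+1,b),(a-1,b),(a,b+1)} := by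
      ext ⟨u,v⟩
      simp [nbrs, Prod.ext_iff]
      try omega
    rw [h, Finset.sum_insert (by simp [Prod.ext_iff]; try omega),
        Finset.sum_insert (by simp [Prod.ext_iff]; try omega), Finset.sum_singleton, add_assoc]
  -- boundary senders away from the run always send -1
  have hbneg : ∀ u v : ℤ, (u,v) ∈ gridV N → (u,v) ∉ gridB N →
      ¬(u = 0 ∧ β₁ ≤ v ∧ v ≤ β₂) → ∀ i ∈ nbrs (u,v), ∀ n : ℕ, m n (u,v) i = -1 := by
    intro u v hV hB hr i hi n
    rw [hbd (u,v) hV hB i hi n]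
    rcases hxpm (u,v) hV hB with h|h
    · exact absurd ((hx1 (u,v) hV hB).mp h) hr
    · exact h
  -- upper bound: every message is at most 1
  have hub : ∀ (n : ℕ) (k j : ℤ×ℤ), k ∈ gridV N → j ∈ nbrs k → m n k j ≤ 1 := by
    intro n k j hV hj
    by_cases hB : k ∈ gridB N
    · cases n with
      | zero => rw [h0 k hB j hj]; norm_num
      | succ n =>
        rw [hup k hB j hj (n+1) (Nat.succ_pos n)]
        exact hsign_le _
    · rw [hbd k hV hB j hj n]
      rcases hxpm k hV hB with h|h <;> omega
  -- main induction: W/S messages are -1 once n ≥ 2N+1-a-b,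
  -- W/N messages are -1 once n ≥ N+b-a (sender (a,b))
  have key : ∀ n : ℕ, ∀ a b : ℤ, 1 ≤ a → a ≤ N → 1 ≤ b → b ≤ N →
      ((2*(N:ℤ)+1 ≤ (n:ℤ) + a + b →
        m n (a,b) (a-1,b) = -1 ∧ m n (a,b) (a,b-1) = -1) ∧
       ((N:ℤ) + b ≤ (n:ℤ) + a →
        m n (a,b) (a-1,b) = -1 ∧ m n (a,b) (a,b+1) = -1)) := by
    intro n
    induction n with
    | zero =>
      intro a b ha1 ha2 hb1 hb2
      constructor <;> intro hth <;> exfalso <;> omega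
    | succ n ih =>
      intro a b ha1 ha2 hb1 hb2
      have hmem : (a,b) ∈ gridB N := memB a b ha1 ha2 hb1 hb2
      constructor
      · intro hth
        have hinW : m n (a+1,b) (a,b) = -1 := by
          by_cases hA : a = N
          · subst hA
            exact hbneg ((N:ℤ)+1) b (memV _ _ (by omega) (by omega) (by omega) (by omega))
              (notB _ _ (by omega)) (by omega)
              ((N:ℤ),b) (memN _ _ _ _ (by omega)) n
          · have h := ((ih (a+1) b (by omega) (by omega) hb1 hb2).1 (by omega)).1
            rw [show (a+1-1 : ℤ) = a by ring] at h
            exact h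
        have hinS : m n (a,b+1) (a,b) = -1 := by
          by_cases hBN : b = N
          · subst hBN
            exact hbneg a ((N:ℤ)+1) (memV _ _ (by omega) (by omega) (by omega) (by omega))
              (notB _ _ (by omega)) (by omega)
              (a,(N:ℤ)) (memN _ _ _ _ (by omega)) n
          · have h := ((ih a (b+1) ha1 ha2 (by omega) (by omega)).1 (by omega)).2
            rw [show (b+1-1 : ℤ) = b by ring] at h
            exact h
        constructor
        · rw [hup (a,b) hmem (a-1,b) (memN _ _ _ _ (by omega)) (n+1) (Nat.succ_pos n)]
          simp only [Nat.add_sub_cancel]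
          rw [hsumW]
          have h3 : m n (a,b-1) (a,b) ≤ 1 :=
            hub n (a,b-1) (a,b) (memV _ _ (by omega) (by omega) (by omega) (by omega))
              (memN _ _ _ _ (by omega))
          exact hsign_neg _ (by omega)
        · rw [hup (a,b) hmem (a,b-1) (memN _ _ _ _ (by omega)) (n+1) (Nat.succ_pos n)]
          simp only [Nat.add_sub_cancel]
          rw [hsumS]
          have h3 : m n (a-1,b) (a,b) ≤ 1 :=
            hub n (a-1,b) (a,b) (memV _ _ (by omega) (by omega) (by omega) (by omega))
              (memN _ _ _ _ (by omega))
          exact hsign_neg _ (by omega)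
      · intro hth
        have hinW : m n (a+1,b) (a,b) = -1 := by
          by_cases hA : a = N
          · subst hA
            exact hbneg ((N:ℤ)+1) b (memV _ _ (by omega) (by omega) (by omega) (by omega))
              (notB _ _ (by omega)) (by omega)
              ((N:ℤ),b) (memN _ _ _ _ (by omega)) n
          · have h := ((ih (a+1) b (by omega) (by omega) hb1 hb2).2 (by omega)).1
            rw [show (a+1-1 : ℤ) = a by ring] at h
            exact h
        have hinN : m n (a,b-1) (a,b) = -1 := by
          by_cases hB1 : b = 1
          · subst hB1
            exact hbneg a 0 (memV _ _ (by omega) (by omega) (by omega) (by omega))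
              (notB _ _ (by omega)) (by omega)
              (a,(1:ℤ)) (memN _ _ _ _ (by omega)) n
          · have h := ((ih a (b-1) ha1 ha2 (by omega) (by omega)).2 (by omega)).2
            rw [show (b-1+1 : ℤ) = b by ring] at h
            exact h
        constructor
        · rw [hup (a,b) hmem (a-1,b) (memN _ _ _ _ (by omega)) (n+1) (Nat.succ_pos n)]
          simp only [Nat.add_sub_cancel]
          rw [hsumW]
          have h3 : m n (a,b+1) (a,b) ≤ 1 :=
            hub n (a,b+1) (a,b) (memV _ _ (by omega) (by omega) (by omega) (by omega))
              (memN _ _ _ _ (by omega))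
          exact hsign_neg _ (by omega)
        · rw [hup (a,b) hmem (a,b+1) (memN _ _ _ _ (by omega)) (n+1) (Nat.succ_pos n)]
          simp only [Nat.add_sub_cancel]
          rw [hsumN]
          have h3 : m n (a-1,b) (a,b) ≤ 1 :=
            hub n (a-1,b) (a,b) (memV _ _ (by omega) (by omega) (by omega) (by omega))
              (memN _ _ _ _ (by omega))
          exact hsign_neg _ (by omega)
  -- E-messages into sites with a ≥ 2
  have keyE : ∀ n : ℕ, 2*N ≤ n → ∀ a b : ℤ, 2 ≤ a → a ≤ N → 1 ≤ b → b ≤ N →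
      m n (a-1,b) (a,b) = -1 := by
    intro n hn a b ha1 ha2 hb1 hb2
    cases n with
    | zero => exfalso; omega
    | succ n =>
      have hmem : (a-1,b) ∈ gridB N := memB _ _ (by omega) (by omega) hb1 hb2
      rw [hup (a-1,b) hmem (a,b) (memN _ _ _ _ (by omega)) (n+1) (Nat.succ_pos n)]
      simp only [Nat.add_sub_cancel]
      rw [show ((a:ℤ),(b:ℤ)) = ((a-1)+1,b) by rw [Prod.mk.injEq]; constructor <;> ring]
      rw [hsumE]
      have hinS : m n (a-1,b+1) (a-1,b) = -1 := by
        by_cases hBN : b = N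
        · subst hBN
          exact hbneg (a-1) ((N:ℤ)+1) (memV _ _ (by omega) (by omega) (by omega) (by omega))
            (notB _ _ (by omega)) (by omega)
            (a-1,(N:ℤ)) (memN _ _ _ _ (by omega)) n
        · have h := ((key n (a-1) (b+1) (by omega) (by omega) (by omega) (by omega)).1
            (by omega)).2
          rw [show (b+1-1 : ℤ) = b by ring] at h
          exact h
      have hinN : m n (a-1,b-1) (a-1,b) = -1 := by
        by_cases hB1 : b = 1
        · subst hB1
          exact hbneg (a-1) 0 (memV _ _ (by omega) (by omega) (by omega) (by omega))
            (notB _ _ (by omega)) (by omega)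
            (a-1,(1:ℤ)) (memN _ _ _ _ (by omega)) n
        · have h := ((key n (a-1) (b-1) (by omega) (by omega) (by omega) (by omega)).2
            (by omega)).2
          rw [show (b-1+1 : ℤ) = b by ring] at h
          exact h
      have hinE : m n (a-1-1,b) (a-1,b) ≤ 1 :=
        hub n (a-1-1,b) (a-1,b) (memV _ _ (by omega) (by omega) (by omega) (by omega))
          (memN _ _ _ _ (by omega))
      exact hsign_neg _ (by omega)
  -- conclusion
  intro n hn a b hmem hreg
  obtain ⟨ha1, ha2, hb1, hb2⟩ := hmem
  have hE : m n (a-1,b) (a,b) = -1 := by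
    by_cases hA : a = 1
    · subst hA
      exact hbneg 0 b (memV _ _ (by omega) (by omega) (by omega) (by omega))
        (notB _ _ (by omega)) (by omega)
        ((1:ℤ)-1+1,b) (memN _ _ _ _ (by omega)) n
    · exact keyE n hn a b (by omega) ha2 hb1 hb2
  have hNm : m n (a,b-1) (a,b) = -1 := by
    by_cases hB1 : b = 1
    · subst hB1
      exact hbneg a 0 (memV _ _ (by omega) (by omega) (by omega) (by omega))
        (notB _ _ (by omega)) (by omega)
        (a,(1:ℤ)) (memN _ _ _ _ (by omega)) n
    · have h := ((key n a (b-1) ha1 ha2 (by omega) (by omega)).2 (by omega)).2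
      rw [show (b-1+1 : ℤ) = b by ring] at h
      exact h
  have hW : m n (a+1,b) (a,b) = -1 := by
    by_cases hA : a = N
    · subst hA
      exact hbneg ((N:ℤ)+1) b (memV _ _ (by omega) (by omega) (by omega) (by omega))
        (notB _ _ (by omega)) (by omega)
        ((N:ℤ),b) (memN _ _ _ _ (by omega)) n
    · have h := ((key n (a+1) b (by omega) (by omega) hb1 hb2).1 (by omega)).1
      rw [show (a+1-1 : ℤ) = a by ring] at h
      exact h
  have hS : m n (a,b+1) (a,b) = -1 := by
    by_cases hBN : b = N
    · subst hBN
      exact hbneg a ((N:ℤ)+1) (memV _ _ (by omega) (by omega) (by omega) (by omega))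
        (notB _ _ (by omega)) (by omega)
        (a,(N:ℤ)) (memN _ _ _ _ (by omega)) n
    · have h := ((key n a (b+1) ha1 ha2 (by omega) (by omega)).1 (by omega)).2
      rw [show (b+1-1 : ℤ) = b by ring] at h
      exact h
  omega
end
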